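/- arXiv:1508.01688 — 2 statements merged into one kernel-verified Lean document; each statement's English description precedes it below -/
import Mathlib

section
/- Let L = U^{e_0} D U^{e_1} D ⋯ D U^{e_n} be a lattice path of length 2n (so e_0 + ⋯ + e_n = n) with e_0 = ℓ ≥ 1. Then exactly ℓ of the n cyclic reorderings L^{(r)} = U^{e_0} D U^{e_{r+1}} ⋯ D U^{e_n} D U^{e_1} ⋯ D U^{e_r}, for r in {0,1,...,n-1}, are Dyck paths. -/
/-!
Let `d` be the `n`-periodic extension of `e 1, …, e n` and `A m = ∑_{k < m} (1 - d k)`.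
The `r`-th rotation is a Dyck path iff `A (r + t) < A r + ℓ = A (r + n)` for all `t < n`,
and since `A (m + n) = A m + ℓ`, this says that `r + n` is a strict record of `A`.
As `A` climbs by at most one per step, its running maximum grows by exactly one at each
record, and over one period it grows by `ℓ`; so exactly `ℓ` of `n, …, 2n - 1` are records.
-/

open scoped Classical

open Finset

def walk (d : ℕ → ℕ) (m : ℕ) : ℤ := ∑ k ∈ range m, (1 - (d k : ℤ))

lemma walk_add (d : ℕ → ℕ) (r t : ℕ) :
    walk d (r + t) = walk d r + t - ∑ k ∈ range t, (d (r + k) : ℤ) := by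
  simp only [walk, sum_range_add, sum_sub_distrib, sum_const, card_range, nsmul_eq_mul,
    mul_one]
  push_cast
  ring

lemma walk_add_one_le (d : ℕ → ℕ) (m : ℕ) : walk d (m + 1) ≤ walk d m + 1 := by
  have := walk_add d m 1
  simp only [range_one, sum_singleton, Nat.cast_one] at this
  omega

lemma walk_add_period {d : ℕ → ℕ} {p : ℕ} (hd : Function.Periodic d p) (m : ℕ) :
    walk d (m + p) = walk d m + walk d p := by
  have hm := walk_add d 0 m
  simp only [zero_add] at hm
  rw [add_comm, walk_add, hm]
  simp only [add_comm p, hd _, walk, range_zero, sum_empty]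
  ring

def IsStrictRecord (A : ℕ → ℤ) (s : ℕ) : Prop := ∀ m < s, A m < A s

/-- The maximum of `A` on `[0, s]`. -/
def prefixMax (A : ℕ → ℤ) (s : ℕ) : ℤ := (range (s + 1)).sup' nonempty_range_add_one A

lemma le_prefixMax (A : ℕ → ℤ) {m s : ℕ} (h : m ≤ s) : A m ≤ prefixMax A s :=
  le_sup' A (mem_range.2 (Nat.lt_add_one_of_le h))

lemma prefixMax_lt_iff (A : ℕ → ℤ) (s : ℕ) (x : ℤ) :
    prefixMax A s < x ↔ ∀ m ≤ s, A m < x := by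
  simp only [prefixMax, sup'_lt_iff, mem_range, Nat.lt_add_one_iff]

lemma prefixMax_add_one (A : ℕ → ℤ) (s : ℕ) :
    prefixMax A (s + 1) = max (A (s + 1)) (prefixMax A s) :=
  (sup'_congr _ range_add_one fun _ _ => rfl).trans (sup'_insert _ _)

lemma isStrictRecord_add_one_iff (A : ℕ → ℤ) (s : ℕ) :
    IsStrictRecord A (s + 1) ↔ prefixMax A s < A (s + 1) := by
  simp only [IsStrictRecord, prefixMax_lt_iff, Nat.lt_add_one_iff]

lemma prefixMax_add_one_sub {A : ℕ → ℤ} (hstep : ∀ m, A (m + 1) ≤ A m + 1) (s : ℕ) :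
    prefixMax A (s + 1) - prefixMax A s = if IsStrictRecord A (s + 1) then 1 else 0 := by
  rw [prefixMax_add_one, isStrictRecord_add_one_iff]
  have := le_prefixMax A le_rfl (s := s)
  have := hstep s
  split_ifs with h <;> omega

lemma prefixMax_add_period {A : ℕ → ℤ} {p ℓ : ℕ} (hper : ∀ m, A (m + p) = A m + ℓ) {s : ℕ}
    (hs : p ≤ s + 1) : prefixMax A (s + p) = prefixMax A s + ℓ := by
  apply le_antisymm
  · refine sup'_le _ _ fun m hm => ?_
    rw [mem_range] at hm
    rcases lt_or_ge m p with hmp | hmp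
    · linarith [le_prefixMax A (show m ≤ s by omega), Int.natCast_nonneg ℓ]
    · obtain ⟨m, rfl⟩ := Nat.exists_eq_add_of_le' hmp
      linarith [le_prefixMax A (show m ≤ s by omega), hper m]
  · rw [← le_sub_iff_add_le]
    refine sup'_le _ _ fun m hm => ?_
    rw [mem_range] at hm
    linarith [le_prefixMax A (show m + p ≤ s + p by omega), hper m]

lemma card_isStrictRecord_add_period {A : ℕ → ℤ} {p ℓ : ℕ}
    (hstep : ∀ m, A (m + 1) ≤ A m + 1) (hper : ∀ m, A (m + p) = A m + ℓ) :
    #{r ∈ range p | IsStrictRecord A (r + p)} = ℓ := by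
  rcases p with _ | N
  · simpa [eq_comm] using hper 0
  zify
  calc (#{r ∈ range (N + 1) | IsStrictRecord A (r + (N + 1))} : ℤ)
      = ∑ r ∈ range (N + 1), (prefixMax A (N + (r + 1)) - prefixMax A (N + r)) := by
        rw [natCast_card_filter]
        refine sum_congr rfl fun r _ => ?_
        rw [show r + (N + 1) = N + r + 1 by omega, ← prefixMax_add_one_sub hstep]
        rfl
    _ = ℓ := by
        rw [sum_range_sub (fun i => prefixMax A (N + i)), prefixMax_add_period hper le_rfl,
          add_zero, add_sub_cancel_left]

lemma isStrictRecord_add_iff {A : ℕ → ℤ} {p ℓ : ℕ} (hper : ∀ m, A (m + p) = A m + ℓ)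
    {r : ℕ} (hr : r ≤ p) :
    IsStrictRecord A (r + p) ↔ ∀ t < p, A (r + t) < A (r + p) := by
  refine ⟨fun h t ht => h _ (by omega), fun h m hm => ?_⟩
  rcases le_or_gt r m with hrm | hmr
  · simpa [Nat.add_sub_cancel' hrm] using h (m - r) (by omega)
  · have := h (m + p - r) (by omega)
    rw [Nat.add_sub_cancel' (by omega), hper] at this
    omega

/-- The sequence `e 1, …, e n` repeated periodically. -/
def cyclicSeq (e : ℕ → ℕ) (n : ℕ) (k : ℕ) : ℕ := e (k % n + 1)

lemma cyclicSeq_periodic (e : ℕ → ℕ) (n : ℕ) : Function.Periodic (cyclicSeq e n) n := by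
  intro k
  simp [cyclicSeq]

lemma walk_cyclicSeq_self (e : ℕ → ℕ) (n : ℕ) :
    walk (cyclicSeq e n) n = n - ∑ k ∈ range n, (e (k + 1) : ℤ) := by
  rw [walk, sum_sub_distrib, sum_const, card_range, nsmul_one]
  congr 1
  exact sum_congr rfl fun k hk => by rw [cyclicSeq, Nat.mod_eq_of_lt (mem_range.1 hk)]

lemma rotation_term_eq (e : ℕ → ℕ) {n r j : ℕ} (hr : r < n) (hj : j < n) :
    (if j + 1 = 0 then e 0 else if j + 1 + r ≤ n then e (j + 1 + r) else e (j + 1 + r - n))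
      = cyclicSeq e n (r + j) := by
  rw [if_neg j.succ_ne_zero, cyclicSeq]
  split_ifs
  · rw [Nat.mod_eq_of_lt (by omega)]
    congr 1
    omega
  · rw [Nat.mod_eq_sub_mod (by omega), Nat.mod_eq_of_lt (by omega)]
    congr 1
    omega

lemma sum_rotation_eq (e : ℕ → ℕ) {n r t : ℕ} (hr : r < n) (ht : t < n) :
    ∑ j ∈ range (t + 1), (if j = 0 then e 0 else if j + r ≤ n then e (j + r) else e (j + r - n))
      = e 0 + ∑ k ∈ range t, cyclicSeq e n (r + k) := by
  rw [sum_range_succ', if_pos rfl, add_comm]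
  exact congrArg _ (sum_congr rfl fun j hj => rotation_term_eq e hr (by simp at hj; omega))

lemma rotation_isDyck_iff (e : ℕ → ℕ) {n r : ℕ} (hr : r < n) :
    (∀ i ∈ Icc 1 n, i ≤ ∑ j ∈ range i,
        (if j = 0 then e 0 else if j + r ≤ n then e (j + r) else e (j + r - n))) ↔
      ∀ t < n, walk (cyclicSeq e n) (r + t) < walk (cyclicSeq e n) r + e 0 := by
  have key : ∀ t < n, (t + 1 ≤ ∑ j ∈ range (t + 1),
      (if j = 0 then e 0 else if j + r ≤ n then e (j + r) else e (j + r - n))) ↔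
        walk (cyclicSeq e n) (r + t) < walk (cyclicSeq e n) r + e 0 := by
    intro t ht
    rw [sum_rotation_eq e hr ht, walk_add]
    zify
    omega
  constructor
  · exact fun h t ht => (key t ht).1 (h (t + 1) (mem_Icc.2 ⟨by omega, by omega⟩))
  · intro h i hi
    obtain ⟨hi1, hin⟩ := mem_Icc.1 hi
    obtain ⟨t, rfl⟩ := Nat.exists_eq_add_of_le' hi1
    exact (key t (by omega)).2 (h t (by omega))

theorem cycle_lemma_general (n ℓ : ℕ) (e : ℕ → ℕ) (h0 : e 0 = ℓ)
    (hsum : ∑ i ∈ Finset.range (n + 1), e i = n) :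
    ((Finset.range n).filter fun r =>
        ∀ i ∈ Finset.Icc 1 n, i ≤ ∑ j ∈ Finset.range i,
          (if j = 0 then e 0 else if j + r ≤ n then e (j + r) else e (j + r - n))).card
      = ℓ := by
  have hwalk : walk (cyclicSeq e n) n = ℓ := by
    rw [sum_range_succ', h0] at hsum
    rw [walk_cyclicSeq_self]
    zify at hsum
    omega
  have hper (m : ℕ) : walk (cyclicSeq e n) (m + n) = walk (cyclicSeq e n) m + ℓ := by
    rw [walk_add_period (cyclicSeq_periodic e n), hwalk]
  calc _ = #{r ∈ range n | IsStrictRecord (walk (cyclicSeq e n)) (r + n)} := by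
        congr 1
        ext r
        simp only [mem_filter, mem_range, and_congr_right_iff]
        intro hr
        rw [rotation_isDyck_iff e hr, isStrictRecord_add_iff hper hr.le, hper, h0]
    _ = ℓ := card_isStrictRecord_add_period (walk_add_one_le _) hper

/-- Cycle lemma: if `L = U^{e_0} D U^{e_1} ⋯ D U^{e_n}` is a lattice path of length `2n`
(so `e_0 + ⋯ + e_n = n`) with `e_0 = ℓ ≥ 1`, then exactly `ℓ` of the `n` cyclic
reorderings `L^{(r)} = U^{e_0} D U^{e_{r+1}} ⋯ D U^{e_n} D U^{e_1} ⋯ D U^{e_r}`,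
`r ∈ {0,…,n-1}`, are Dyck paths (all partial sums dominate the index). -/
theorem cycle_lemma (n ℓ : ℕ) (e : ℕ → ℕ) (hℓ : 1 ≤ ℓ) (h0 : e 0 = ℓ)
    (hsum : ∑ i ∈ Finset.range (n + 1), e i = n) :
    ((Finset.range n).filter fun r =>
        ∀ i ∈ Finset.Icc 1 n, i ≤ ∑ j ∈ Finset.range i,
          (if j = 0 then e 0 else if j + r ≤ n then e (j + r) else e (j + r - n))).card
      = ℓ :=
  cycle_lemma_general n ℓ e h0 hsum
end

section
/- The generating functions C_k(z) = Σ_{n≥0} C_{k,n} z^{n+1} and M_{k-1}(z) = Σ_{n≥0} M_{k-1,n} z^{n+1} satisfy C_k(z)·(1 - M_{k-1}(z)) = z, where C_{k,n} counts plane trees with n+1 nodes whose non-root nodes have degree < k, and M_{k-1,n} counts plane trees with n+1 nodes all of degree ≤ k-1. -/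
/-- `d` is the multi-degree sequence of a plane tree with `n+1` nodes. -/
def IsTreeDeg (n : ℕ) (d : ℕ → ℕ) : Prop :=
  (∀ i, n < i → d i = 0) ∧ (∑ i ∈ Finset.range (n + 1), d i = n) ∧
    (∀ i, 1 ≤ i → i ≤ n → i ≤ ∑ j ∈ Finset.range i, d j)

/-- The generalized Motzkin number `M_{k,n}`: the number of plane trees with `n+1`
nodes all of whose nodes have degree at most `k`. -/
noncomputable def motzkinNum (k n : ℕ) : ℕ :=
  Nat.card {d : ℕ → ℕ // IsTreeDeg n d ∧ ∀ i, i ≤ n → d i ≤ k}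

/-- The modular Catalan number `C_{k,n}`: the number of plane trees with `n+1`
nodes whose non-root nodes have degree less than `k`. -/
noncomputable def modCatalanNum (k n : ℕ) : ℕ :=
  Nat.card {d : ℕ → ℕ // IsTreeDeg n d ∧ ∀ i, 1 ≤ i → i ≤ n → d i < k}

/-- The generating function `M_k(z) = ∑_{n≥0} M_{k,n} z^{n+1}`. -/
noncomputable def Mgf (k : ℕ) : PowerSeries ℤ :=
  PowerSeries.mk fun m => if m = 0 then 0 else (motzkinNum k (m - 1) : ℤ)

/-- The generating function `C_k(z) = ∑_{n≥0} C_{k,n} z^{n+1}`. -/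
noncomputable def Cgf (k : ℕ) : PowerSeries ℤ :=
  PowerSeries.mk fun m => if m = 0 then 0 else (modCatalanNum k (m - 1) : ℤ)

/-!
A plane tree is encoded by its preorder degree sequence. Cutting off the first subtree of the root
splits a tree counted by `C_{k,n+1}` into that subtree, all of whose nodes have degree `< k`
(counted by `M_{k-1,a}`), and the remaining tree, whose root is unrestricted (counted by `C_{k,b}`),
with `a + b = n`. In the degree sequence the first subtree occupies the positions `1, …, s` for the
least `s` at which the degrees there sum to less than `s`. Hence
`C_{k,n+1} = ∑_{a+b=n} M_{k-1,a} C_{k,b}` and `C_{k,0} = 1`, that is `C_k = z + M_{k-1} C_k`.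
-/

open Finset PowerSeries

namespace IsTreeDeg

variable {n : ℕ} {d : ℕ → ℕ}

lemma apply_le (hd : IsTreeDeg n d) (i : ℕ) : d i ≤ n := by
  rcases lt_or_ge n i with h | h
  · simp [hd.1 i h]
  · exact hd.2.1 ▸ single_le_sum (fun j _ => Nat.zero_le (d j)) (mem_range.2 (by omega))

lemma one_le_root (hd : IsTreeDeg (n + 1) d) : 1 ≤ d 0 := by
  simpa using hd.2.2 1 le_rfl (by omega)

lemma zero_iff : IsTreeDeg 0 d ↔ d = 0 := by
  constructor
  · intro hd
    funext i
    rcases i with _ | i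
    · simpa using hd.2.1
    · exact hd.1 (i + 1) i.succ_pos
  · rintro rfl
    exact ⟨fun _ _ => rfl, by simp, fun i h1 h2 => by omega⟩

instance finite (n : ℕ) (P : (ℕ → ℕ) → Prop) :
    Finite {d : ℕ → ℕ // IsTreeDeg n d ∧ P d} := by
  refine Finite.of_injective (β := Fin (n + 1) → Fin (n + 1))
    (fun d i => ⟨d.1 i, Nat.lt_succ_of_le (d.2.1.apply_le i)⟩)
    fun d d' h => Subtype.ext (funext fun i => ?_)
  rcases lt_or_ge n i with hi | hi
  · rw [d.2.1.1 i hi, d'.2.1.1 i hi]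
  · simpa using congrArg Fin.val (congrFun h ⟨i, Nat.lt_succ_of_le hi⟩)

end IsTreeDeg

abbrev MotzkinDegSeq (k n : ℕ) := {d : ℕ → ℕ // IsTreeDeg n d ∧ ∀ i, i ≤ n → d i ≤ k}

abbrev ModCatalanDegSeq (k n : ℕ) :=
  {d : ℕ → ℕ // IsTreeDeg n d ∧ ∀ i, 1 ≤ i → i ≤ n → d i < k}

lemma sum_range_add_two_add (d : ℕ → ℕ) (a t : ℕ) :
    ∑ j ∈ range (a + 2 + t), d j
      = d 0 + ∑ j ∈ range (a + 1), d (j + 1) + ∑ j ∈ range t, d (a + 2 + j) := by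
  rw [show a + 2 + t = a + 1 + t + 1 by omega, sum_range_succ', sum_range_add]
  simp only [show ∀ j, a + 1 + j + 1 = a + 2 + j from fun j => by omega]
  ring

namespace TreeDeg

variable {a b n : ℕ} {d e f : ℕ → ℕ}

/-- The degree sequence of the tree `f` with the tree `e` (of `a + 1` nodes) attached to its root
as the new first child. -/
def graft (a : ℕ) (e f : ℕ → ℕ) : ℕ → ℕ
  | 0 => f 0 + 1
  | i + 1 => if i ≤ a then e i else f (i - a)

def firstSubtree (a : ℕ) (d : ℕ → ℕ) (i : ℕ) : ℕ := if i ≤ a then d (i + 1) else 0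

def restTree (a : ℕ) (d : ℕ → ℕ) : ℕ → ℕ
  | 0 => d 0 - 1
  | j + 1 => d (a + 2 + j)

noncomputable def firstSubtreeSize (d : ℕ → ℕ) : ℕ :=
  sInf {s | ∑ j ∈ range s, d (j + 1) < s}

@[simp] lemma graft_zero : graft a e f 0 = f 0 + 1 := rfl

lemma graft_succ_of_le {i : ℕ} (hi : i ≤ a) : graft a e f (i + 1) = e i := if_pos hi

lemma graft_add_two_add (j : ℕ) : graft a e f (a + 2 + j) = f (j + 1) := by
  rw [show a + 2 + j = (a + 1 + j) + 1 by omega, graft, if_neg (by omega)]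
  congr 1
  omega

lemma sum_range_graft_succ {t : ℕ} (ht : t ≤ a + 1) :
    ∑ j ∈ range t, graft a e f (j + 1) = ∑ j ∈ range t, e j :=
  sum_congr rfl fun j hj => graft_succ_of_le (by simp at hj; omega)

lemma sum_range_graft (he : ∑ j ∈ range (a + 1), e j = a) (t : ℕ) :
    ∑ j ∈ range (a + 2 + t), graft a e f j = a + 1 + ∑ j ∈ range (t + 1), f j := by
  rw [sum_range_add_two_add, sum_range_graft_succ le_rfl, he, sum_range_succ' f]
  simp only [graft_zero, graft_add_two_add]
  ring

lemma isTreeDeg_graft (he : IsTreeDeg a e) (hf : IsTreeDeg b f) :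
    IsTreeDeg (a + b + 1) (graft a e f) := by
  refine ⟨fun i hi => ?_, ?_, fun i h1 h2 => ?_⟩
  · obtain ⟨j, rfl⟩ : ∃ j, i = a + 2 + j := ⟨i - (a + 2), by omega⟩
    rw [graft_add_two_add]
    exact hf.1 _ (by omega)
  · rw [show a + b + 1 + 1 = a + 2 + b by omega, sum_range_graft he.2.1, hf.2.1]
    ring
  · rcases le_or_gt i (a + 1) with hi | hi
    · obtain ⟨t, rfl⟩ : ∃ t, i = t + 1 := ⟨i - 1, by omega⟩
      rw [sum_range_succ', sum_range_graft_succ (by omega), graft_zero]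
      rcases t.eq_zero_or_pos with rfl | ht
      · simp
      · have := he.2.2 t ht (by omega)
        omega
    · obtain ⟨t, rfl⟩ : ∃ t, i = a + 2 + t := ⟨i - (a + 2), by omega⟩
      rw [sum_range_graft he.2.1]
      have := hf.2.2 (t + 1) (by omega) (by omega)
      omega

lemma firstSubtreeSize_eq (hsum : ∑ j ∈ range (a + 1), d (j + 1) = a)
    (hpre : ∀ t ≤ a, t ≤ ∑ j ∈ range t, d (j + 1)) : firstSubtreeSize d = a + 1 := by
  have hmem : a + 1 ∈ {s | ∑ j ∈ range s, d (j + 1) < s} := by simp [hsum]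
  refine le_antisymm (Nat.sInf_le hmem) (le_csInf ⟨_, hmem⟩ fun s hs => ?_)
  by_contra! h
  exact (hpre s (by omega)).not_gt hs

lemma firstSubtreeSize_graft (he : IsTreeDeg a e) :
    firstSubtreeSize (graft a e f) = a + 1 := by
  refine firstSubtreeSize_eq ?_ fun t ht => ?_
  · rw [sum_range_graft_succ le_rfl, he.2.1]
  · rw [sum_range_graft_succ (by omega)]
    rcases t.eq_zero_or_pos with rfl | h
    · simp
    · exact he.2.2 t h ht

lemma _root_.IsTreeDeg.exists_firstSubtree_sum_eq (hd : IsTreeDeg (n + 1) d) :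
    ∃ a ≤ n, ∑ j ∈ range (a + 1), d (j + 1) = a ∧
      ∀ t ≤ a, t ≤ ∑ j ∈ range t, d (j + 1) := by
  set S := {s | ∑ j ∈ range s, d (j + 1) < s}
  have hroot := hd.one_le_root
  have hmem : n + 1 ∈ S := by
    have := hd.2.1
    rw [sum_range_succ'] at this
    simp only [S, Set.mem_ofPred_eq]
    omega
  have hpre : ∀ t < sInf S, t ≤ ∑ j ∈ range t, d (j + 1) := fun t ht => by
    simpa [S] using Nat.notMem_of_lt_sInf ht
  obtain ⟨a, ha⟩ : ∃ a, sInf S = a + 1 := Nat.exists_eq_succ_of_ne_zero fun h => by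
    simpa [S, h] using Nat.sInf_mem ⟨_, hmem⟩
  have hlt : ∑ j ∈ range (a + 1), d (j + 1) < a + 1 := ha ▸ Nat.sInf_mem ⟨_, hmem⟩
  have hle : ∑ j ∈ range a, d (j + 1) ≤ ∑ j ∈ range (a + 1), d (j + 1) :=
    sum_le_sum_of_subset (range_subset_range.2 a.le_succ)
  refine ⟨a, by have := Nat.sInf_le hmem; omega, ?_, fun t ht => hpre t (by omega)⟩
  have := hpre a (by omega)
  omega

lemma firstSubtree_graft (he : ∀ i, a < i → e i = 0) : firstSubtree a (graft a e f) = e := by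
  funext i
  unfold firstSubtree
  split_ifs with hi
  · exact graft_succ_of_le hi
  · exact (he i (by omega)).symm

lemma restTree_graft : restTree a (graft a e f) = f := by
  funext j
  cases j with
  | zero => simp [restTree]
  | succ j => exact graft_add_two_add j

lemma graft_inj {a' : ℕ} {e' f' : ℕ → ℕ} (he : IsTreeDeg a e) (he' : IsTreeDeg a' e')
    (h : graft a e f = graft a' e' f') : a = a' ∧ e = e' ∧ f = f' := by
  have hsize := congrArg firstSubtreeSize h
  rw [firstSubtreeSize_graft he, firstSubtreeSize_graft he'] at hsize
  obtain rfl : a = a' := by omega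
  refine ⟨rfl, ?_, ?_⟩
  · rw [← firstSubtree_graft (f := f) he.1, h, firstSubtree_graft he'.1]
  · rw [← restTree_graft (a := a) (e := e) (f := f), h, restTree_graft]

lemma graft_firstSubtree_restTree (hroot : 1 ≤ d 0) :
    graft a (firstSubtree a d) (restTree a d) = d := by
  funext i
  rcases i with _ | i
  · simp [restTree]
    omega
  · rcases le_or_gt i a with hi | hi
    · rw [graft_succ_of_le hi, firstSubtree, if_pos hi]
    · obtain ⟨j, rfl⟩ : ∃ j, i = a + 1 + j := ⟨i - (a + 1), by omega⟩
      rw [show a + 1 + j + 1 = a + 2 + j by omega, graft_add_two_add, restTree]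

lemma isTreeDeg_firstSubtree (hsum : ∑ j ∈ range (a + 1), d (j + 1) = a)
    (hpre : ∀ t ≤ a, t ≤ ∑ j ∈ range t, d (j + 1)) : IsTreeDeg a (firstSubtree a d) := by
  have hsum_eq : ∀ t ≤ a + 1, ∑ j ∈ range t, firstSubtree a d j = ∑ j ∈ range t, d (j + 1) :=
    fun t ht => sum_congr rfl fun j hj => if_pos (by simp at hj; omega)
  refine ⟨fun i hi => if_neg (by omega), ?_, fun t _ ht => ?_⟩
  · rw [hsum_eq _ le_rfl, hsum]
  · rw [hsum_eq _ (by omega)]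
    exact hpre t ht

lemma isTreeDeg_restTree (hd : IsTreeDeg (n + 1) d)
    (hsum : ∑ j ∈ range (a + 1), d (j + 1) = a) (ha : a ≤ n) :
    IsTreeDeg (n - a) (restTree a d) := by
  have hroot := hd.one_le_root
  have hsplit : ∀ t, ∑ j ∈ range (a + 2 + t), d j
      = d 0 - 1 + ∑ j ∈ range t, restTree a d (j + 1) + (a + 1) := fun t => by
    rw [sum_range_add_two_add, hsum]
    simp only [restTree]
    omega
  refine ⟨fun i hi => ?_, ?_, fun i h1 h2 => ?_⟩
  · obtain ⟨j, rfl⟩ : ∃ j, i = j + 1 := ⟨i - 1, by omega⟩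
    exact hd.1 _ (by omega)
  · have := hsplit (n - a)
    rw [show a + 2 + (n - a) = n + 1 + 1 by omega, hd.2.1] at this
    rw [sum_range_succ']
    simp only [restTree] at this ⊢
    omega
  · obtain ⟨t, rfl⟩ : ∃ t, i = t + 1 := ⟨i - 1, by omega⟩
    have := hd.2.2 (a + 2 + t) (by omega) (by omega)
    rw [hsplit] at this
    rw [sum_range_succ']
    simp only [restTree] at this ⊢
    omega

variable {k : ℕ}

def graftDegSeq (hk : 1 ≤ k) (n : ℕ)
    (x : Σ p : antidiagonal n, MotzkinDegSeq (k - 1) p.1.1 × ModCatalanDegSeq k p.1.2) :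
    ModCatalanDegSeq k (n + 1) :=
  ⟨graft x.1.1.1 x.2.1.1 x.2.2.1, by
    obtain ⟨⟨⟨a, b⟩, hab⟩, ⟨e, he, he_le⟩, ⟨f, hf, hf_lt⟩⟩ := x
    obtain rfl : a + b = n := HasAntidiagonal.mem_antidiagonal.1 hab
    dsimp only at he he_le hf hf_lt ⊢
    refine ⟨isTreeDeg_graft he hf, fun i h1 h2 => ?_⟩
    obtain ⟨i, rfl⟩ : ∃ j, i = j + 1 := ⟨i - 1, by omega⟩
    by_cases hi : i ≤ a
    · rw [graft_succ_of_le hi]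
      have := he_le i hi
      omega
    · obtain ⟨j, rfl⟩ : ∃ j, i = a + 1 + j := ⟨i - (a + 1), by omega⟩
      rw [show a + 1 + j + 1 = a + 2 + j by omega, graft_add_two_add]
      exact hf_lt _ (by omega) (by omega)⟩

lemma graftDegSeq_bijective (hk : 1 ≤ k) (n : ℕ) :
    Function.Bijective (graftDegSeq hk n) := by
  constructor
  · rintro ⟨⟨⟨a, b⟩, hab⟩, ⟨e, he, _⟩, ⟨f, _⟩⟩ ⟨⟨⟨a', b'⟩, hab'⟩, ⟨e', he', _⟩, ⟨f', _⟩⟩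
      h
    have h : graft a e f = graft a' e' f' := congrArg Subtype.val h
    obtain ⟨rfl, rfl, rfl⟩ := graft_inj he he' h
    obtain rfl : b = b' := by
      rw [HasAntidiagonal.mem_antidiagonal] at hab hab'
      dsimp only at hab'
      omega
    rfl
  · rintro ⟨d, hd, hd_lt⟩
    obtain ⟨a, ha, hsum, hpre⟩ := hd.exists_firstSubtree_sum_eq
    refine ⟨⟨⟨(a, n - a), HasAntidiagonal.mem_antidiagonal.2 (by omega)⟩,
      ⟨firstSubtree a d, isTreeDeg_firstSubtree hsum hpre, fun i hi => ?_⟩,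
      ⟨restTree a d, isTreeDeg_restTree hd hsum ha, fun i h1 h2 => ?_⟩⟩,
      Subtype.ext (graft_firstSubtree_restTree hd.one_le_root)⟩
    · dsimp only at hi
      rw [firstSubtree, if_pos hi]
      have := hd_lt (i + 1) (by omega) (by omega)
      omega
    · dsimp only at h2
      obtain ⟨j, rfl⟩ : ∃ j, i = j + 1 := ⟨i - 1, by omega⟩
      exact hd_lt _ (by omega) (by omega)

end TreeDeg

theorem modCatalanNum_succ {k : ℕ} (hk : 1 ≤ k) (n : ℕ) :
    modCatalanNum k (n + 1) =
      ∑ p ∈ antidiagonal n, motzkinNum (k - 1) p.1 * modCatalanNum k p.2 := by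
  rw [modCatalanNum,
    ← Nat.card_congr (Equiv.ofBijective _ (TreeDeg.graftDegSeq_bijective hk n)), Nat.card_sigma]
  simp only [Nat.card_prod]
  exact sum_coe_sort _ fun p : ℕ × ℕ => motzkinNum (k - 1) p.1 * modCatalanNum k p.2

theorem modCatalanNum_zero (k : ℕ) : modCatalanNum k 0 = 1 :=
  Nat.card_eq_one_iff_exists.2 ⟨⟨0, IsTreeDeg.zero_iff.2 rfl, fun i h1 h2 => by omega⟩,
    fun d => Subtype.ext (IsTreeDeg.zero_iff.1 d.2.1)⟩

lemma Cgf_eq_X_mul (k : ℕ) :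
    Cgf k = X * PowerSeries.mk fun n => (modCatalanNum k n : ℤ) := by
  ext (_ | m) <;> simp [Cgf, coeff_succ_X_mul]

lemma Mgf_eq_X_mul (k : ℕ) : Mgf k = X * PowerSeries.mk fun n => (motzkinNum k n : ℤ) := by
  ext (_ | m) <;> simp [Mgf, coeff_succ_X_mul]

theorem mk_modCatalanNum_eq {k : ℕ} (hk : 1 ≤ k) :
    (PowerSeries.mk fun n => (modCatalanNum k n : ℤ)) =
      1 + X * (PowerSeries.mk fun n => (motzkinNum (k - 1) n : ℤ)) *
        PowerSeries.mk fun n => (modCatalanNum k n : ℤ) := by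
  ext (_ | n)
  · simp [modCatalanNum_zero]
  · rw [map_add, mul_assoc, coeff_succ_X_mul, coeff_mul]
    simp [modCatalanNum_succ hk]

/-- `C_k(z)·(1 - M_{k-1}(z)) = z`. -/
theorem Cgf_mul_one_sub_Mgf (k : ℕ) (hk : 1 ≤ k) :
    Cgf k * (1 - Mgf (k - 1)) = PowerSeries.X := by
  rw [Cgf_eq_X_mul, Mgf_eq_X_mul]
  linear_combination X * mk_modCatalanNum_eq hk
end
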